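/- Assume λ_min(W) > L/2, so that W is symmetric positive definite. Then the operator T_G is firmly nonexpansive with respect to W: for all x, y ∈ ℝ^{m₁+m₂}, ‖T_G(x) − T_G(y)‖²_W ≤ ⟨T_G(x) − T_G(y), x − y⟩_W. In particular, T_G is ½-averaged nonexpansive with respect to W. -/

import Mathlib

/-!
Both components of `T_G` are proximal steps of proper convex functions (`β g` and `η ι_d*`),
so each is firmly nonexpansive in the Euclidean metric. Scaling the two inequalities by `1/β`
and `1/η` and adding them gives firm nonexpansiveness in the `W`-metric, because the extrapolated
term `2η D p` in the dual step cancels the off-diagonal blocks of `W`. Firm nonexpansiveness of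
`T` says exactly that `2T - I` is nonexpansive, i.e. that `T` is ½-averaged.
-/

noncomputable section

open scoped BigOperators

/-- `ℝ^n` with the Euclidean structure. -/
abbrev Euc (n : ℕ) := EuclideanSpace ℝ (Fin n)

/-- Matrix–vector multiplication, landing in Euclidean space. -/
def mVec {p q : ℕ} (A : Matrix (Fin p) (Fin q) ℝ) (v : Euc q) : Euc p :=
  WithLp.toLp 2 (fun i => ∑ j, A i j * v j)

/-- The set of proximity points of an extended-real-valued function `ψ` at `x`:
`prox_ψ(x) = argmin_u {½‖u−x‖² + ψ(u)}`. -/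
def proxSet {n : ℕ} (ψ : Euc n → EReal) (x : Euc n) : Set (Euc n) :=
  {p | ∀ u : Euc n,
    ((1 / 2 * ‖p - x‖ ^ 2 : ℝ) : EReal) + ψ p ≤ ((1 / 2 * ‖u - x‖ ^ 2 : ℝ) : EReal) + ψ u}

/-- The indicator function `ι_d` of the set `{x | x ≥ d}` (componentwise). -/
def iotaInd {n : ℕ} (d : Euc n) : Euc n → EReal :=
  fun y => if ∀ i, d i ≤ y i then (0 : EReal) else ⊤

/-- The convex (Fenchel) conjugate `ψ*(x) = sup_u {⟨x,u⟩ − ψ(u)}`. -/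
def conjFn {n : ℕ} (ψ : Euc n → EReal) : Euc n → EReal :=
  fun x => ⨆ u : Euc n, (((inner ℝ x u : ℝ) : EReal) - ψ u)


/-- The block operator `W = P⁻¹G = [[(1/β)I, −Dᵀ],[−D, (1/η)I]]` on `ℝ^{m₁} × ℝ^{m₂}`. -/
def Wapp {m₁ m₂ : ℕ} (β η : ℝ) (D : Matrix (Fin m₂) (Fin m₁) ℝ)
    (z : Euc m₁ × Euc m₂) : Euc m₁ × Euc m₂ :=
  ((1 / β) • z.1 - mVec D.transpose z.2, -(mVec D z.1) + (1 / η) • z.2)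

/-- The bilinear form `⟨z, Ww⟩` associated with `W`. -/
def ipW {m₁ m₂ : ℕ} (β η : ℝ) (D : Matrix (Fin m₂) (Fin m₁) ℝ)
    (z w : Euc m₁ × Euc m₂) : ℝ :=
  (inner ℝ z.1 (Wapp β η D w).1 : ℝ) + (inner ℝ z.2 (Wapp β η D w).2 : ℝ)

/-- The `W`-weighted norm `‖z‖_W = ⟨z, Wz⟩^{1/2}`. -/
def normW {m₁ m₂ : ℕ} (β η : ℝ) (D : Matrix (Fin m₂) (Fin m₁) ℝ)
    (z : Euc m₁ × Euc m₂) : ℝ :=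
  Real.sqrt (ipW β η D z z)

open Filter Topology
open scoped RealInnerProductSpace

/-- Convexity of an extended-real-valued function is expressed as convexity of this set. -/
def epigraph {E : Type*} (ψ : E → EReal) : Set (E × ℝ) := {q | ψ q.1 ≤ q.2}

section Epigraph

variable {E : Type*} [AddCommGroup E] [Module ℝ E]

lemma ConvexOn.convex_epigraph_coe {g : E → ℝ} (hg : ConvexOn ℝ Set.univ g) :
    Convex ℝ (epigraph fun u => (g u : EReal)) := by
  convert hg.convex_epigraph using 1
  ext q
  simp [epigraph]

lemma Convex.epigraph_coe_mul {ψ : E → EReal} (hψ : Convex ℝ (epigraph ψ)) {c : ℝ} (hc : 0 < c) :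
    Convex ℝ (epigraph fun u => (c : EReal) * ψ u) := by
  have : (epigraph fun u => (c : EReal) * ψ u) =
      LinearMap.prodMap (LinearMap.id (R := ℝ)) (c⁻¹ • LinearMap.id) ⁻¹' epigraph ψ := by
    ext q
    simp only [epigraph, Set.mem_ofPred_eq, Set.mem_preimage, LinearMap.prodMap_apply,
      LinearMap.id_apply, LinearMap.smul_apply, smul_eq_mul]
    rw [mul_comm, ← EReal.le_div_iff_mul_le (by exact_mod_cast hc) (EReal.coe_ne_top c),
      ← EReal.coe_div, inv_mul_eq_div]
  rw [this]
  exact hψ.linear_preimage _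

end Epigraph

lemma convex_epigraph_conjFn {n : ℕ} (ψ : Euc n → EReal) : Convex ℝ (epigraph (conjFn ψ)) := by
  have : epigraph (conjFn ψ) = ⋂ u, {q | ((inner ℝ q.1 u : ℝ) : EReal) - ψ u ≤ q.2} := by
    ext q
    simp [epigraph, conjFn]
  rw [this]
  refine convex_iInter fun u => ?_
  induction ψ u using EReal.rec with
  | bot => simp [convex_empty]
  | top => simp [convex_univ]
  | coe c =>
    intro q hq q' hq' a b ha hb hab
    simp only [Set.mem_ofPred_eq, ← EReal.coe_sub, EReal.coe_le_coe_iff, Prod.fst_add,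
      Prod.snd_add, Prod.smul_fst, Prod.smul_snd, smul_eq_mul, inner_add_left,
      real_inner_smul_left] at hq hq' ⊢
    have hc : c = a * c + b * c := by rw [← add_mul, hab, one_mul]
    linarith [mul_le_mul_of_nonneg_left hq ha, mul_le_mul_of_nonneg_left hq' hb]

section Prox

variable {n : ℕ} {ψ : Euc n → EReal} {x x' p p' : Euc n}

lemma ne_top_of_mem_proxSet (hp : p ∈ proxSet ψ x) {u : Euc n} (hu : ψ u ≠ ⊤) : ψ p ≠ ⊤ := by
  intro h
  have := hp u
  rw [h, EReal.coe_add_top, top_le_iff] at this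
  exact EReal.add_ne_top (EReal.coe_ne_top _) hu this

lemma add_inner_le_of_mem_proxSet (hψ : Convex ℝ (epigraph ψ)) (hp : p ∈ proxSet ψ x)
    {a b : ℝ} (ha : ψ p = a) {u : Euc n} (hb : ψ u ≤ b) :
    a + ⟪x - p, u - p⟫ ≤ b := by
  -- compare `p` with the points `(1 - t) • p + t • u` and let `t → 0⁺`
  have step : ∀ t ∈ Set.Ioc (0 : ℝ) 1, a + ⟪x - p, u - p⟫ ≤ b + t * (‖u - p‖ ^ 2 / 2) := by
    rintro t ⟨ht0, ht1⟩
    have hconv : (1 - t) • (p, a) + t • (u, b) ∈ epigraph ψ :=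
      hψ (show (p, a) ∈ epigraph ψ from ha.le) hb (by linarith) ht0.le (by ring)
    have hmin := (hp ((1 - t) • p + t • u)).trans (add_le_add_right
      (hconv : ψ ((1 - t) • p + t • u) ≤ (((1 - t) * a + t * b : ℝ) : EReal)) _)
    rw [ha, ← EReal.coe_add, ← EReal.coe_add, EReal.coe_le_coe_iff] at hmin
    have hsq : ‖(1 - t) • p + t • u - x‖ ^ 2
        = ‖p - x‖ ^ 2 + 2 * t * ⟪p - x, u - p⟫ + t ^ 2 * ‖u - p‖ ^ 2 := by
      rw [show (1 - t) • p + t • u - x = (p - x) + t • (u - p) by module, norm_add_sq_real,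
        real_inner_smul_right, norm_smul, mul_pow, Real.norm_eq_abs, sq_abs]
      ring
    have hneg : ⟪p - x, u - p⟫ = -⟪x - p, u - p⟫ := by rw [← inner_neg_left, neg_sub]
    rw [hsq, hneg, Prod.snd_add, Prod.smul_snd, Prod.smul_snd, smul_eq_mul, smul_eq_mul] at hmin
    refine le_of_mul_le_mul_left ?_ ht0
    linarith
  have hlim : Tendsto (fun t : ℝ => b + t * (‖u - p‖ ^ 2 / 2)) (𝓝[>] 0) (𝓝 b) := by
    refine tendsto_nhdsWithin_of_tendsto_nhds (Continuous.tendsto' ?_ _ _ (by simp))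
    fun_prop
  refine ge_of_tendsto hlim ?_
  filter_upwards [Ioc_mem_nhdsGT one_pos] with t ht using step t ht

lemma inner_le_inner_of_mem_proxSet (hψ : Convex ℝ (epigraph ψ)) (hψ_bot : ∀ u, ψ u ≠ ⊥)
    (hψ_dom : ∃ u, ψ u ≠ ⊤) (hp : p ∈ proxSet ψ x) (hp' : p' ∈ proxSet ψ x') :
    ⟪p - p', p - p'⟫ ≤ ⟪p - p', x - x'⟫ := by
  obtain ⟨u₀, hu₀⟩ := hψ_dom
  have ha := EReal.coe_toReal (ne_top_of_mem_proxSet hp hu₀) (hψ_bot p)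
  have hb := EReal.coe_toReal (ne_top_of_mem_proxSet hp' hu₀) (hψ_bot p')
  have h₁ := add_inner_le_of_mem_proxSet hψ hp ha.symm hb.ge
  have h₂ := add_inner_le_of_mem_proxSet hψ hp' hb.symm ha.ge
  have hx : x - x' = (p - p') + ((x - p) - (x' - p')) := by abel
  have hcross : ⟪p - p', (x - p) - (x' - p')⟫ = -⟪x - p, p' - p⟫ - ⟪x' - p', p - p'⟫ := by
    rw [inner_sub_right, real_inner_comm (x - p) (p - p'), real_inner_comm (x' - p') (p - p'),
      ← neg_sub p p', inner_neg_right]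
    ring
  rw [hx, inner_add_right, hcross]
  linarith

end Prox

section Indicator

variable {n : ℕ} (d : Euc n)

lemma inner_le_conjFn_iotaInd (u : Euc n) : ((⟪u, d⟫ : ℝ) : EReal) ≤ conjFn (iotaInd d) u := by
  simpa [iotaInd, conjFn] using le_iSup (fun v => ((⟪u, v⟫ : ℝ) : EReal) - iotaInd d v) d

lemma conjFn_iotaInd_zero_le : conjFn (iotaInd d) 0 ≤ 0 := by
  refine iSup_le fun u => ?_
  unfold iotaInd
  split_ifs <;> simp

lemma coe_mul_conjFn_iotaInd_ne_bot {η : ℝ} (hη : 0 < η) (u : Euc n) :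
    (η : EReal) * conjFn (iotaInd d) u ≠ ⊥ := by
  have hlb := inner_le_conjFn_iotaInd d u
  generalize conjFn (iotaInd d) u = c at hlb ⊢
  induction c using EReal.rec with
  | bot => simp at hlb
  | coe c => exact_mod_cast EReal.coe_ne_bot (η * c)
  | top => simp [EReal.coe_mul_top_of_pos hη]

lemma coe_mul_conjFn_iotaInd_zero_ne_top (η : ℝ) : (η : EReal) * conjFn (iotaInd d) 0 ≠ ⊤ := by
  have hlb := inner_le_conjFn_iotaInd d 0
  have hub := conjFn_iotaInd_zero_le d
  generalize conjFn (iotaInd d) 0 = c at hlb hub ⊢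
  induction c using EReal.rec with
  | bot => simp at hlb
  | coe c => exact_mod_cast EReal.coe_ne_top (η * c)
  | top => simp at hub

end Indicator

section WMetric

variable {m₁ m₂ : ℕ} (β η : ℝ) (D : Matrix (Fin m₂) (Fin m₁) ℝ)

lemma mVec_eq_toEuclideanLin {p q : ℕ} (A : Matrix (Fin p) (Fin q) ℝ) :
    mVec A = Matrix.toEuclideanLin A := rfl

lemma inner_mVec_transpose {p q : ℕ} (A : Matrix (Fin p) (Fin q) ℝ) (u : Euc q) (v : Euc p) :
    ⟪u, mVec A.transpose v⟫ = ⟪mVec A u, v⟫ := by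
  rw [mVec_eq_toEuclideanLin, mVec_eq_toEuclideanLin, ← Matrix.conjTranspose_eq_transpose_of_trivial,
    Matrix.toEuclideanLin_conjTranspose_eq_adjoint, LinearMap.adjoint_inner_right]

lemma ipW_apply (z w : Euc m₁ × Euc m₂) :
    ipW β η D z w = β⁻¹ * ⟪z.1, w.1⟫ - ⟪z.1, mVec D.transpose w.2⟫ - ⟪z.2, mVec D w.1⟫
      + η⁻¹ * ⟪z.2, w.2⟫ := by
  simp only [ipW, Wapp, one_div, inner_sub_right, inner_add_right, inner_neg_right,
    real_inner_smul_right]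
  ring

def ipWForm : LinearMap.BilinForm ℝ (Euc m₁ × Euc m₂) :=
  LinearMap.mk₂ ℝ (ipW β η D)
    (fun z z' w => by simp only [ipW_apply, Prod.fst_add, Prod.snd_add, inner_add_left]; ring)
    (fun c z w => by
      simp only [ipW_apply, Prod.smul_fst, Prod.smul_snd, real_inner_smul_left, smul_eq_mul]; ring)
    (fun z w w' => by
      simp only [ipW_apply, Prod.fst_add, Prod.snd_add, inner_add_right, mVec_eq_toEuclideanLin,
        map_add]; ring)
    (fun c z w => by
      simp only [ipW_apply, Prod.smul_fst, Prod.smul_snd, real_inner_smul_right, smul_eq_mul,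
        mVec_eq_toEuclideanLin, map_smul]; ring)

@[simp]
lemma ipWForm_apply (z w : Euc m₁ × Euc m₂) : ipWForm β η D z w = ipW β η D z w := rfl

lemma ipWForm_isSymm : (ipWForm β η D).IsSymm := by
  refine LinearMap.BilinForm.isSymm_def.mpr fun z w => ?_
  rw [ipWForm_apply, ipWForm_apply, ipW_apply, ipW_apply, inner_mVec_transpose,
    inner_mVec_transpose, real_inner_comm z.1 w.1, real_inner_comm z.2 w.2,
    real_inner_comm z.2 (mVec D w.1), real_inner_comm (mVec D z.1) w.2]
  ring

lemma ipW_le_ipW_of_inner_le (hβ : 0 < β) (hη : 0 < η) {z w : Euc m₁ × Euc m₂}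
    (h₁ : ⟪z.1, z.1⟫ ≤ ⟪z.1, w.1 - β • mVec D.transpose w.2⟫)
    (h₂ : ⟪z.2, z.2⟫ ≤ ⟪z.2, (2 * η) • mVec D z.1 - η • mVec D w.1 + w.2⟫) :
    ipW β η D z z ≤ ipW β η D z w := by
  rw [inner_sub_right, real_inner_smul_right, inner_mVec_transpose] at h₁
  rw [inner_add_right, inner_sub_right, real_inner_smul_right, real_inner_smul_right] at h₂
  have k₁ : β⁻¹ * ⟪z.1, z.1⟫ ≤ β⁻¹ * ⟪z.1, w.1⟫ - ⟪mVec D z.1, w.2⟫ := by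
    field_simp
    linarith
  have k₂ : η⁻¹ * ⟪z.2, z.2⟫
      ≤ 2 * ⟪z.2, mVec D z.1⟫ - ⟪z.2, mVec D w.1⟫ + η⁻¹ * ⟪z.2, w.2⟫ := by
    field_simp
    linarith
  rw [ipW_apply, ipW_apply, inner_mVec_transpose, inner_mVec_transpose,
    real_inner_comm z.2 (mVec D z.1)]
  linarith

end WMetric

lemma LinearMap.BilinForm.IsSymm.apply_two_smul_sub_le {V : Type*} [AddCommGroup V]
    [Module ℝ V] {B : LinearMap.BilinForm ℝ V} (hB : B.IsSymm) {v u : V} (h : B v v ≤ B v u) :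
    B ((2 : ℝ) • v - u) ((2 : ℝ) • v - u) ≤ B u u := by
  have hsymm := hB.eq u v
  simp only [map_sub, map_smul, LinearMap.sub_apply, LinearMap.smul_apply, smul_eq_mul]
  linarith

theorem stmt12_general {m₁ m₂ : ℕ} (D : Matrix (Fin m₂) (Fin m₁) ℝ) (d : Euc m₂)
    (g : Euc m₁ → ℝ) (hgconv : ConvexOn ℝ Set.univ g)
    (β η : ℝ) (hβ : 0 < β) (hη : 0 < η)
    (TG : Euc m₁ × Euc m₂ → Euc m₁ × Euc m₂)
    (hTG : ∀ w : Euc m₁ × Euc m₂,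
      (TG w).1 ∈ proxSet (fun u => ((β * g u : ℝ) : EReal))
          (w.1 - β • mVec D.transpose w.2) ∧
      (TG w).2 ∈ proxSet (fun u => ((η : ℝ) : EReal) * conjFn (iotaInd d) u)
          ((2 * η) • mVec D (TG w).1 - η • mVec D w.1 + w.2)) :
    (∀ x y : Euc m₁ × Euc m₂,
      ipW β η D (TG x - TG y) (TG x - TG y) ≤ ipW β η D (TG x - TG y) (x - y)) ∧
    ∃ N : Euc m₁ × Euc m₂ → Euc m₁ × Euc m₂,
      (∀ x y : Euc m₁ × Euc m₂, normW β η D (N x - N y) ≤ normW β η D (x - y)) ∧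
      ∀ z : Euc m₁ × Euc m₂, TG z = (1 - (1 / 2 : ℝ)) • z + (1 / 2 : ℝ) • N z := by
  have hψ₁ : Convex ℝ (epigraph fun u => ((β * g u : ℝ) : EReal)) :=
    (hgconv.smul hβ.le).convex_epigraph_coe
  have hψ₂ : Convex ℝ (epigraph fun u => (η : EReal) * conjFn (iotaInd d) u) :=
    (convex_epigraph_conjFn _).epigraph_coe_mul hη
  have firm : ∀ x y : Euc m₁ × Euc m₂,
      ipW β η D (TG x - TG y) (TG x - TG y) ≤ ipW β η D (TG x - TG y) (x - y) := by
    intro x y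
    obtain ⟨hpx, hqx⟩ := hTG x
    obtain ⟨hpy, hqy⟩ := hTG y
    have h₁ := inner_le_inner_of_mem_proxSet hψ₁ (fun _ => EReal.coe_ne_bot _)
      ⟨0, EReal.coe_ne_top _⟩ hpx hpy
    have h₂ := inner_le_inner_of_mem_proxSet hψ₂ (coe_mul_conjFn_iotaInd_ne_bot d hη)
      ⟨0, coe_mul_conjFn_iotaInd_zero_ne_top d η⟩ hqx hqy
    refine ipW_le_ipW_of_inner_le β η D hβ hη (h₁.trans_eq ?_) (h₂.trans_eq ?_) <;>
      simp only [Prod.fst_sub, Prod.snd_sub, mVec_eq_toEuclideanLin, map_sub] <;> congr 1 <;> module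
  refine ⟨firm, fun z => (2 : ℝ) • TG z - z, fun x y => Real.sqrt_le_sqrt ?_, fun z => by module⟩
  rw [show (2 : ℝ) • TG x - x - ((2 : ℝ) • TG y - y) = (2 : ℝ) • (TG x - TG y) - (x - y) by module]
  exact (ipWForm_isSymm β η D).apply_two_smul_sub_le (firm x y)

/-- assume λ_min(W) > L/2 (so W is symmetric positive definite).
Then T_G is firmly nonexpansive with respect to W:
‖T_G(x) − T_G(y)‖²_W ≤ ⟨T_G(x) − T_G(y), x − y⟩_W for all x, y; in particular,
T_G is ½-averaged nonexpansive with respect to W.  `TG` is characterized by its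
implicit fixed-point property `hTG`. -/
theorem stmt12 {m₁ m₂ : ℕ} (D : Matrix (Fin m₂) (Fin m₁) ℝ) (d : Euc m₂)
    (g : Euc m₁ → ℝ) (hgconv : ConvexOn ℝ Set.univ g)
    (L : ℝ) (hL : 0 < L)
    (β η : ℝ) (hβ : 0 < β) (hη : 0 < η)
    (TG : Euc m₁ × Euc m₂ → Euc m₁ × Euc m₂)
    (hTG : ∀ w : Euc m₁ × Euc m₂,
      (TG w).1 ∈ proxSet (fun u => ((β * g u : ℝ) : EReal))
          (w.1 - β • mVec D.transpose w.2) ∧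
      (TG w).2 ∈ proxSet (fun u => ((η : ℝ) : EReal) * conjFn (iotaInd d) u)
          ((2 * η) • mVec D (TG w).1 - η • mVec D w.1 + w.2))
    (lammin : ℝ)
    (hlam : IsLeast {μ : ℝ | ∃ z : Euc m₁ × Euc m₂, z ≠ 0 ∧ Wapp β η D z = μ • z} lammin)
    (hgt : L / 2 < lammin) :
    (∀ x y : Euc m₁ × Euc m₂,
      ipW β η D (TG x - TG y) (TG x - TG y) ≤ ipW β η D (TG x - TG y) (x - y)) ∧
    ∃ N : Euc m₁ × Euc m₂ → Euc m₁ × Euc m₂,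
      (∀ x y : Euc m₁ × Euc m₂, normW β η D (N x - N y) ≤ normW β η D (x - y)) ∧
      ∀ z : Euc m₁ × Euc m₂, TG z = (1 - (1 / 2 : ℝ)) • z + (1 / 2 : ℝ) • N z :=
  stmt12_general D d g hgconv β η hβ hη TG hTG
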